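/- There exists ε₀ > 0 such that for every ε ∈ (0, ε₀): (i) the total derivative (Jacobian matrix) of H_ε² at p_ε equals the matrix with rows (−1, −2y_ε) and (−2y_ε² + 2ε − 2x_ε + 6, −4(y_ε² − ε + x_ε − 3)y_ε − 1), where x_ε = y_ε = −1 + √(4+ε); (ii) the quantity 36 + 13ε − (4ε+18)√(4+ε) + ε² is positive; (iii) the eigenvalues of this matrix are exactly λ±(ε) = 9 + 2ε − 4√(4+ε) ± 2√(36 + 13ε − (4ε+18)√(4+ε) + ε²); and (iv) λ₊(ε)·λ₋(ε) = 1. -/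

import Mathlib

noncomputable section

/-- The area-preserving Hénon map `H_ε(x,y) = (y, -x + 3 + ε - y²)`. -/
def henon (ε : ℝ) : ℝ × ℝ → ℝ × ℝ := fun p => (p.2, -p.1 + 3 + ε - p.2 ^ 2)

/-- The second iterate `H_ε² = H_ε ∘ H_ε`. -/
def henon2 (ε : ℝ) : ℝ × ℝ → ℝ × ℝ := henon ε ∘ henon ε

/-- `x_ε = y_ε = -1 + √(4+ε)`. -/
def ye (ε : ℝ) : ℝ := -1 + Real.sqrt (4 + ε)

/-- The fixed point `p_ε = (x_ε, y_ε)`. -/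
def henonFixed (ε : ℝ) : ℝ × ℝ := (ye ε, ye ε)

/-- The eigenvalue `λ₊(ε)`. -/
def lamPlus (ε : ℝ) : ℝ :=
  9 + 2 * ε - 4 * Real.sqrt (4 + ε) +
    2 * Real.sqrt (36 + 13 * ε - (4 * ε + 18) * Real.sqrt (4 + ε) + ε ^ 2)

/-- The eigenvalue `λ₋(ε)`. -/
def lamMinus (ε : ℝ) : ℝ :=
  9 + 2 * ε - 4 * Real.sqrt (4 + ε) -
    2 * Real.sqrt (36 + 13 * ε - (4 * ε + 18) * Real.sqrt (4 + ε) + ε ^ 2)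

/-- The Jacobian matrix of `H_ε²` at the fixed point, with rows
`(-1, -2y_ε)` and `(-2y_ε² + 2ε - 2x_ε + 6, -4(y_ε² - ε + x_ε - 3)y_ε - 1)`. -/
def jacM (ε : ℝ) : Matrix (Fin 2) (Fin 2) ℝ :=
  !![-1, -2 * ye ε;
     -2 * ye ε ^ 2 + 2 * ε - 2 * ye ε + 6, -4 * (ye ε ^ 2 - ε + ye ε - 3) * ye ε - 1]

/-- The continuous linear map `ℝ² → ℝ²` associated to a `2 × 2` matrix. -/
def clmOfMatrix (M : Matrix (Fin 2) (Fin 2) ℝ) : ℝ × ℝ →L[ℝ] ℝ × ℝ :=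
  ((M 0 0 • ContinuousLinearMap.fst ℝ ℝ ℝ + M 0 1 • ContinuousLinearMap.snd ℝ ℝ ℝ).prod
   (M 1 0 • ContinuousLinearMap.fst ℝ ℝ ℝ + M 1 1 • ContinuousLinearMap.snd ℝ ℝ ℝ))

/-!
By the chain rule the Jacobian of `H_ε²` at `p` is `J(H_ε p) · J(p)`, where
`J(x, y) = !![0, 1; -1, -2y]` is the Jacobian of `H_ε`; this product is `jacM ε` at `p = p_ε`,
and its determinant is `1` because `det J = 1`. The eigenvalues of a `2 × 2` matrix are the
roots of `λ² - (tr) λ + det`, so it remains to check `λ₊ + λ₋ = tr (jacM ε)` and `λ₊ λ₋ = 1`.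
With `s = √(4+ε)` the discriminant factors as `s (s-1)² (s-2)`, positive for `s > 2`.
-/

def henonJacobian (p : ℝ × ℝ) : Matrix (Fin 2) (Fin 2) ℝ :=
  !![0, 1; -1, -2 * p.2]

theorem det_henonJacobian (p : ℝ × ℝ) : (henonJacobian p).det = 1 := by
  simp [henonJacobian, Matrix.det_fin_two]

theorem clmOfMatrix_mul (A B : Matrix (Fin 2) (Fin 2) ℝ) :
    clmOfMatrix (A * B) = (clmOfMatrix A).comp (clmOfMatrix B) := by
  ext <;> simp [clmOfMatrix, Matrix.mul_apply, Fin.sum_univ_two]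

theorem hasFDerivAt_henon (ε : ℝ) (p : ℝ × ℝ) :
    HasFDerivAt (henon ε) (clmOfMatrix (henonJacobian p)) p := by
  have hsecond : HasFDerivAt (fun q : ℝ × ℝ => -q.1 + 3 + ε - q.2 ^ 2)
      (-ContinuousLinearMap.fst ℝ ℝ ℝ - (2 * p.2) • ContinuousLinearMap.snd ℝ ℝ ℝ) p := by
    refine (((hasFDerivAt_fst.neg.add_const 3).add_const ε).sub
      (hasFDerivAt_snd.pow 2)).congr_fderiv ?_
    simp
  refine (hasFDerivAt_snd.prodMk hsecond).congr_fderiv ?_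
  ext <;> simp [clmOfMatrix, henonJacobian]

theorem hasFDerivAt_henon2 (ε : ℝ) (p : ℝ × ℝ) :
    HasFDerivAt (henon2 ε) (clmOfMatrix (henonJacobian (henon ε p) * henonJacobian p)) p := by
  rw [clmOfMatrix_mul]
  exact (hasFDerivAt_henon ε (henon ε p)).comp p (hasFDerivAt_henon ε p)

theorem jacM_eq_mul (ε : ℝ) :
    jacM ε = henonJacobian (henon ε (henonFixed ε)) * henonJacobian (henonFixed ε) := by
  rw [henonJacobian, henonJacobian, Matrix.mul_fin_two, jacM]
  ext i j
  fin_cases i <;> fin_cases j <;>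
    simp only [henon, henonFixed, Matrix.of_apply, Matrix.cons_val', Matrix.cons_val_zero,
      Matrix.cons_val_one, Matrix.cons_val_fin_one, Fin.zero_eta, Fin.mk_one, Fin.isValue] <;> ring

theorem det_jacM (ε : ℝ) : (jacM ε).det = 1 := by
  rw [jacM_eq_mul, Matrix.det_mul, det_henonJacobian, det_henonJacobian, one_mul]

theorem Matrix.spectrum_fin_two_eq {K : Type*} [Field K] (A : Matrix (Fin 2) (Fin 2) K)
    {a b : K} (htr : A.trace = a + b) (hdet : A.det = a * b) : spectrum K A = {a, b} := by
  have hchar (x : K) : (algebraMap K _ x - A).det = (x - a) * (x - b) := by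
    rw [Matrix.trace_fin_two] at htr
    rw [Matrix.det_fin_two] at hdet ⊢
    simp only [Matrix.sub_apply, Matrix.algebraMap_matrix_apply, Algebra.algebraMap_self,
      RingHom.id_apply, Fin.isValue, if_true, zero_ne_one, one_ne_zero, if_false]
    linear_combination hdet - x * htr
  ext x
  rw [spectrum.mem_iff, Matrix.isUnit_iff_isUnit_det, isUnit_iff_ne_zero, not_ne_iff, hchar,
    mul_eq_zero, sub_eq_zero, sub_eq_zero, Set.mem_insert_iff, Set.mem_singleton_iff]

def henonDisc (ε : ℝ) : ℝ :=
  36 + 13 * ε - (4 * ε + 18) * Real.sqrt (4 + ε) + ε ^ 2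

theorem henonDisc_eq_factor {ε : ℝ} (hε : -4 ≤ ε) :
    henonDisc ε = Real.sqrt (4 + ε) * (Real.sqrt (4 + ε) - 1) ^ 2 * (Real.sqrt (4 + ε) - 2) := by
  have hs := Real.sq_sqrt (show 0 ≤ 4 + ε by linarith)
  unfold henonDisc
  linear_combination (-Real.sqrt (4 + ε) ^ 2 + 4 * Real.sqrt (4 + ε) - 9 - ε) * hs

theorem two_lt_sqrt_four_add {ε : ℝ} (hε : 0 < ε) : 2 < Real.sqrt (4 + ε) := by
  rw [Real.lt_sqrt zero_le_two]
  linarith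

theorem henonDisc_pos {ε : ℝ} (hε : 0 < ε) : 0 < henonDisc ε := by
  have hs := two_lt_sqrt_four_add hε
  rw [henonDisc_eq_factor (by linarith)]
  have : 0 < Real.sqrt (4 + ε) - 1 := by linarith
  positivity

theorem lamPlus_add_lamMinus {ε : ℝ} (hε : -4 ≤ ε) : lamPlus ε + lamMinus ε = (jacM ε).trace := by
  have hs := Real.sq_sqrt (show 0 ≤ 4 + ε by linarith)
  simp only [lamPlus, lamMinus, jacM, ye, Matrix.trace_fin_two, Matrix.of_apply,
    Matrix.cons_val', Matrix.cons_val_zero, Matrix.cons_val_one, Matrix.empty_val',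
    Matrix.cons_val_fin_one]
  linear_combination (4 * Real.sqrt (4 + ε) - 8) * hs

theorem lamPlus_mul_lamMinus {ε : ℝ} (hε : -4 ≤ ε) (hD : 0 ≤ henonDisc ε) :
    lamPlus ε * lamMinus ε = 1 := by
  have hs := Real.sq_sqrt (show 0 ≤ 4 + ε by linarith)
  have ht := Real.sq_sqrt hD
  unfold henonDisc at ht
  simp only [lamPlus, lamMinus]
  linear_combination 16 * hs - 4 * ht

/-- (i) The total derivative of `H_ε²` at `p_ε` is the matrix `jacM ε`;
(ii) `36 + 13ε - (4ε+18)√(4+ε) + ε² > 0`;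
(iii) the eigenvalues of this matrix are exactly `λ₊(ε)` and `λ₋(ε)`;
(iv) `λ₊(ε)·λ₋(ε) = 1`. -/
theorem henon2_jacobian_and_eigenvalues :
    ∃ ε₀ : ℝ, 0 < ε₀ ∧ ∀ ε : ℝ, 0 < ε → ε < ε₀ →
      HasFDerivAt (henon2 ε) (clmOfMatrix (jacM ε)) (henonFixed ε) ∧
      0 < 36 + 13 * ε - (4 * ε + 18) * Real.sqrt (4 + ε) + ε ^ 2 ∧
      spectrum ℝ (jacM ε) = {lamPlus ε, lamMinus ε} ∧
      lamPlus ε * lamMinus ε = 1 := by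
  refine ⟨1, one_pos, fun ε hε _ => ?_⟩
  have hε4 : -4 ≤ ε := by linarith
  have hD := henonDisc_pos hε
  have hprod := lamPlus_mul_lamMinus hε4 hD.le
  refine ⟨?_, hD, ?_, hprod⟩
  · rw [jacM_eq_mul]
    exact hasFDerivAt_henon2 ε (henonFixed ε)
  · exact Matrix.spectrum_fin_two_eq _ (lamPlus_add_lamMinus hε4).symm (by rw [det_jacM, hprod])
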